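/- arXiv:1808.10328 — 5 statements merged into one kernel-verified Lean document; each statement's English description precedes it below -/
import Mathlib

section
/- If y is obtained from x by a tandem duplication of length k (inserting an exact copy of a length-k substring of x immediately after its original position), then φ_k(y) is obtained from φ_k(x) by inserting a block of k zeros at the corresponding position. -/
/-!
In the duplicated string `y`, `y_i = x_i` for `i < j` and `y_i = x_{i-k}` for `i ≥ j`. Hence
`y_i - y_{i-k}` equals `φ_k(x)_i` before position `j`, vanishes on the inserted copy (both terms
are `x_{i-k}`), and equals `φ_k(x)_{i-k}` after it.
-/

/-- The map `φ_k` on strings (lists) over `ℤ_q`: the `i`-th symbol (0-based) of the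
output is `x_i - x_{i-k}`, with the convention that out-of-range symbols are `0`. -/
def phiL (q k : ℕ) (x : List (ZMod q)) : List (ZMod q) :=
  (List.range x.length).map fun i =>
    x.getD i 0 - (if k ≤ i then x.getD (i - k) 0 else 0)

theorem List.ext_getD_of_length_eq {α : Type*} {l₁ l₂ : List α} (d : α)
    (hl : l₁.length = l₂.length) (h : ∀ i < l₁.length, l₁.getD i d = l₂.getD i d) :
    l₁ = l₂ :=
  ext_getElem hl fun i h₁ h₂ => by
    rw [← getD_eq_getElem _ d h₁, ← getD_eq_getElem _ d h₂, h i h₁]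

section Insertion

variable {α : Type*}

def insertBlock (j : ℕ) (m l : List α) : List α :=
  l.take j ++ m ++ l.drop j

def tandemDup (k j : ℕ) (x : List α) : List α :=
  insertBlock j ((x.drop (j - k)).take k) x

variable {j k : ℕ}

theorem length_insertBlock (m : List α) {l : List α} (hj : j ≤ l.length) :
    (insertBlock j m l).length = l.length + m.length := by
  simp only [insertBlock, List.length_append, List.length_take, List.length_drop]
  omega

theorem getD_insertBlock (m : List α) {l : List α} (d : α) (hj : j ≤ l.length) (i : ℕ) :
    (insertBlock j m l).getD i d =
      if i < j then l.getD i d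
      else if i < j + m.length then m.getD (i - j) d
      else l.getD (i - m.length) d := by
  grind [insertBlock]

theorem length_tandemDup {x : List α} (hjk : k ≤ j) (hj : j ≤ x.length) :
    (tandemDup k j x).length = x.length + k := by
  rw [tandemDup, length_insertBlock _ hj]
  simp only [List.length_take, List.length_drop]
  omega

theorem getD_tandemDup {x : List α} (d : α) (hjk : k ≤ j) (hj : j ≤ x.length) (i : ℕ) :
    (tandemDup k j x).getD i d = x.getD (if i < j then i else i - k) d := by
  rw [tandemDup, getD_insertBlock _ _ hj]
  grind

end Insertion

section Phi

variable {q k : ℕ}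

theorem length_phiL (x : List (ZMod q)) : (phiL q k x).length = x.length := by
  simp [phiL]

theorem getD_phiL {x : List (ZMod q)} {i : ℕ} (h : i < x.length) :
    (phiL q k x).getD i 0 = x.getD i 0 - if k ≤ i then x.getD (i - k) 0 else 0 := by
  rw [phiL, List.getD_eq_getElem?_getD, List.getElem?_map, List.getElem?_range h]
  rfl

theorem phiL_tandemDup {x : List (ZMod q)} {j : ℕ} (hjk : k ≤ j) (hj : j ≤ x.length) :
    phiL q k (tandemDup k j x) = insertBlock j (List.replicate k 0) (phiL q k x) := by
  have hjφ : j ≤ (phiL q k x).length := (length_phiL x).symm ▸ hj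
  refine List.ext_getD_of_length_eq 0 ?_ fun i hi => ?_
  · rw [length_phiL, length_insertBlock _ hjφ, length_tandemDup hjk hj, length_phiL,
      List.length_replicate]
  rw [length_phiL, length_tandemDup hjk hj] at hi
  rw [getD_phiL (by rwa [length_tandemDup hjk hj]), getD_insertBlock _ _ hjφ,
    List.length_replicate, getD_tandemDup _ hjk hj, getD_tandemDup _ hjk hj]
  rcases lt_or_ge i j with hij | hji
  · rw [if_pos hij, if_pos hij, getD_phiL (by omega), if_pos (show i - k < j by omega)]
  rcases lt_or_ge i (j + k) with hik | hik
  · simp [hji.not_gt, hik, show k ≤ i by omega, show i - k < j by omega]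
  · rw [if_neg hji.not_gt, if_neg hji.not_gt, if_neg hik.not_gt, if_pos (show k ≤ i by omega),
      if_neg (show ¬ i - k < j by omega), getD_phiL (by omega), if_pos (show k ≤ i - k by omega)]

end Phi

theorem stmt1_general (q k : ℕ)
    (x : List (ZMod q)) (j : ℕ) (hjk : k ≤ j) (hj : j ≤ x.length) :
    phiL q k (x.take j ++ (x.drop (j - k)).take k ++ x.drop j)
      = (phiL q k x).take j ++ List.replicate k (0 : ZMod q) ++ (phiL q k x).drop j :=
  phiL_tandemDup hjk hj

/-- if `y` is obtained from `x` by a tandem duplication of length `k`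
at position `j` (i.e. `y = x_1 … x_j x_{j-k+1} … x_j x_{j+1} … x_n`), then
`φ_k(y)` is obtained from `φ_k(x)` by inserting a block of `k` zeros at position `j`. -/
theorem stmt1 (q k : ℕ) (hq : 2 ≤ q) (hk : 1 ≤ k)
    (x : List (ZMod q)) (j : ℕ) (hjk : k ≤ j) (hj : j ≤ x.length) :
    phiL q k (x.take j ++ (x.drop (j - k)).take k ++ x.drop j)
      = (phiL q k x).take j ++ List.replicate k (0 : ZMod q) ++ (phiL q k x).drop j :=
  stmt1_general q k x j hjk hj
end

section
/- A code C ⊆ Z_q^n can correct t insertions of blocks 0^k if and only if it can correct t deletions of blocks 0^k. -/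
/-- One insertion of a block `0^k` at some position of the string `x`. -/
def Ins (q k : ℕ) (x y : List (ZMod q)) : Prop :=
  ∃ j ≤ x.length, y = x.take j ++ List.replicate k (0 : ZMod q) ++ x.drop j

/-- `InsN q k u x y`: `y` is obtainable from `x` by `u` successive insertions of `0^k`. -/
def InsN (q k : ℕ) : ℕ → List (ZMod q) → List (ZMod q) → Prop
  | 0, x, y => y = x
  | u + 1, x, y => ∃ z, Ins q k x z ∧ InsN q k u z y

/-- One deletion of a block of `k` consecutive zeros. -/
def Del (q k : ℕ) (x y : List (ZMod q)) : Prop := Ins q k y x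

/-- `DelN q k u x y`: `y` is obtainable from `x` by `u` successive deletions of blocks `0^k`. -/
def DelN (q k : ℕ) : ℕ → List (ZMod q) → List (ZMod q) → Prop
  | 0, x, y => y = x
  | u + 1, x, y => ∃ z, Del q k x z ∧ DelN q k u z y

/-- `C` corrects `t` insertions of blocks `0^k`. -/
def CorrectsIns (q k t : ℕ) (C : Set (List (ZMod q))) : Prop :=
  ∀ x ∈ C, ∀ x' ∈ C, ∀ y,
    (∃ u ≤ t, InsN q k u x y) → (∃ u' ≤ t, InsN q k u' x' y) → x = x'

/-- `C` corrects `t` deletions of blocks `0^k`. -/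
def CorrectsDel (q k t : ℕ) (C : Set (List (ZMod q))) : Prop :=
  ∀ x ∈ C, ∀ x' ∈ C, ∀ y,
    (∃ u ≤ t, DelN q k u x y) → (∃ u' ≤ t, DelN q k u' x' y) → x = x'

/-! Insertions of `0^k` form a diamond: two insertions into the same string are joined by one
further insertion into each result. Deletions almost do: if the two deleted blocks overlap, they
lie in a single run of zeros and both deletions give the same string; otherwise deleting the other
block from each result joins them. Tiling these diamonds, two strings reachable from a common
string by at most `t` steps are joined by at most `t` further steps from each, for insertions and
for deletions alike. Since `x` deletes to `y` exactly when `y` inserts to `x`, two codewords then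
have a common `t`-insertion descendant iff they have a common `t`-deletion descendant. -/

section RelIter

variable {α : Type*} {r : α → α → Prop} {a b c : α} {m n : ℕ}

def RelIter (r : α → α → Prop) : ℕ → α → α → Prop
  | 0, a, b => b = a
  | n + 1, a, b => ∃ c, r a c ∧ RelIter r n c b

theorem RelIter.trans : ∀ {m : ℕ} {a : α}, RelIter r m a b → RelIter r n b c →
    RelIter r (m + n) a c
  | 0, _, rfl, h => by simpa using h
  | m + 1, _, ⟨d, had, hdb⟩, h => by
    rw [Nat.add_right_comm]
    exact ⟨d, had, hdb.trans h⟩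

theorem relIter_one : RelIter r 1 a b ↔ r a b := by
  simp [RelIter]

theorem relIter_succ_iff' : RelIter r (n + 1) a c ↔ ∃ b, RelIter r n a b ∧ r b c := by
  constructor
  · induction n generalizing a with
    | zero => exact fun ⟨d, had, hdc⟩ => ⟨a, rfl, hdc ▸ had⟩
    | succ n ih =>
      rintro ⟨d, had, hdc⟩
      obtain ⟨b, hdb, hbc⟩ := ih hdc
      exact ⟨b, ⟨d, had, hdb⟩, hbc⟩
  · rintro ⟨b, hab, hbc⟩
    exact hab.trans (relIter_one.mpr hbc)

theorem relIter_flip : ∀ {n : ℕ} {a b : α}, RelIter (flip r) n a b ↔ RelIter r n b a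
  | 0, _, _ => eq_comm
  | n + 1, a, b => by
    rw [relIter_succ_iff']
    exact exists_congr fun c => and_comm.trans (and_congr_right' relIter_flip)

theorem RelIter.of_reflGen (h : Relation.ReflGen r a b) : ∃ u ≤ 1, RelIter r u a b := by
  cases h with
  | refl => exact ⟨0, zero_le_one, rfl⟩
  | single h => exact ⟨1, le_rfl, relIter_one.mpr h⟩

variable (hr : ∀ a b c, r a b → r a c → ∃ d, Relation.ReflGen r b d ∧ Relation.ReflGen r c d)
include hr

theorem RelIter.strip (hab : r a b) (hac : RelIter r n a c) :
    ∃ d, (∃ u ≤ n, RelIter r u b d) ∧ Relation.ReflGen r c d := by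
  induction n generalizing a b with
  | zero => exact ⟨b, ⟨0, le_rfl, rfl⟩, .single (hac ▸ hab)⟩
  | succ n ih =>
    obtain ⟨e, hae, hec⟩ := hac
    obtain ⟨f, hbf, hef⟩ := hr a b e hab hae
    cases hef with
    | refl =>
      obtain ⟨v, hv, hbe⟩ := RelIter.of_reflGen hbf
      exact ⟨c, ⟨v + n, by omega, hbe.trans hec⟩, .refl⟩
    | single hef =>
      obtain ⟨d, ⟨u, hu, hfd⟩, hcd⟩ := ih hef hec
      obtain ⟨v, hv, hbf⟩ := RelIter.of_reflGen hbf
      exact ⟨d, ⟨v + u, by omega, hbf.trans hfd⟩, hcd⟩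

theorem RelIter.tile (hab : RelIter r m a b) (hac : RelIter r n a c) :
    ∃ d, (∃ u ≤ n, RelIter r u b d) ∧ ∃ v ≤ m, RelIter r v c d := by
  induction m generalizing a n c with
  | zero => exact ⟨c, ⟨n, le_rfl, hab ▸ hac⟩, 0, le_rfl, rfl⟩
  | succ m ih =>
    obtain ⟨e, hae, heb⟩ := hab
    obtain ⟨f, ⟨u, hu, hef⟩, hcf⟩ := RelIter.strip hr hae hac
    obtain ⟨d, ⟨w, hw, hbd⟩, v, hv, hfd⟩ := ih heb hef
    obtain ⟨s, hs, hcf⟩ := RelIter.of_reflGen hcf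
    exact ⟨d, ⟨w, by omega, hbd⟩, s + v, by omega, hcf.trans hfd⟩

theorem RelIter.exists_join_within {t : ℕ} (hab : ∃ m ≤ t, RelIter r m a b)
    (hac : ∃ n ≤ t, RelIter r n a c) :
    ∃ d, (∃ u ≤ t, RelIter r u b d) ∧ ∃ v ≤ t, RelIter r v c d := by
  obtain ⟨m, hm, hab⟩ := hab
  obtain ⟨n, hn, hac⟩ := hac
  obtain ⟨d, ⟨u, hu, hbd⟩, v, hv, hcd⟩ := RelIter.tile hr hab hac
  exact ⟨d, ⟨u, hu.trans hn, hbd⟩, v, hv.trans hm, hcd⟩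

end RelIter

theorem insN_eq_relIter (q k : ℕ) : InsN q k = RelIter (Ins q k) := by
  ext n x y
  induction n generalizing x with
  | zero => rfl
  | succ n ih => exact exists_congr fun z => and_congr_right' (ih z)

theorem delN_eq_relIter (q k : ℕ) : DelN q k = RelIter (Del q k) := by
  ext n x y
  induction n generalizing x with
  | zero => rfl
  | succ n ih => exact exists_congr fun z => and_congr_right' (ih z)

theorem delN_iff_insN {q k u : ℕ} {x y : List (ZMod q)} : DelN q k u x y ↔ InsN q k u y x := by
  rw [delN_eq_relIter, insN_eq_relIter]
  exact relIter_flip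

open List in
theorem ins_iff_exists_append {q k : ℕ} {x y : List (ZMod q)} :
    Ins q k x y ↔ ∃ a b, x = a ++ b ∧ y = a ++ replicate k 0 ++ b := by
  constructor
  · rintro ⟨j, -, rfl⟩
    exact ⟨x.take j, x.drop j, (take_append_drop j x).symm, rfl⟩
  · rintro ⟨a, b, rfl, rfl⟩
    exact ⟨a.length, by simp, by simp⟩

open List in
theorem ins_diamond {q k : ℕ} {z x x' : List (ZMod q)} (hx : Ins q k z x) (hx' : Ins q k z x') :
    ∃ y, Ins q k x y ∧ Ins q k x' y := by
  obtain ⟨a, b, rfl, rfl⟩ := ins_iff_exists_append.mp hx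
  obtain ⟨a', b', h, rfl⟩ := ins_iff_exists_append.mp hx'
  rcases append_eq_append_iff.mp h with ⟨c, rfl, rfl⟩ | ⟨c, rfl, rfl⟩
  · exact ⟨a ++ replicate k 0 ++ c ++ replicate k 0 ++ b',
      ins_iff_exists_append.mpr ⟨a ++ replicate k 0 ++ c, b', by simp, rfl⟩,
      ins_iff_exists_append.mpr ⟨a, c ++ replicate k 0 ++ b', by simp, by simp⟩⟩
  · exact ⟨a' ++ replicate k 0 ++ c ++ replicate k 0 ++ b,
      ins_iff_exists_append.mpr ⟨a', c ++ replicate k 0 ++ b, by simp, by simp⟩,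
      ins_iff_exists_append.mpr ⟨a' ++ replicate k 0 ++ c, b, by simp, rfl⟩⟩

open List in
theorem exists_reflGen_del_of_append_eq {q k : ℕ} (a c b b' : List (ZMod q))
    (h : replicate k 0 ++ b' = c ++ (replicate k 0 ++ b)) :
    ∃ z, Relation.ReflGen (Del q k) (a ++ c ++ b) z ∧ Relation.ReflGen (Del q k) (a ++ b') z := by
  rcases append_eq_append_iff.mp h with ⟨d, rfl, rfl⟩ | ⟨e, hce, h⟩
  · exact ⟨a ++ d ++ b, .single (ins_iff_exists_append.mpr ⟨a, d ++ b, by simp, by simp⟩),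
      .single (ins_iff_exists_append.mpr ⟨a ++ d, b, by simp, by simp⟩)⟩
  · -- the deleted blocks overlap, so `c` and `e` are runs of zeros
    obtain ⟨hlen, hc, he⟩ := append_eq_replicate_iff.mp hce.symm
    have hec : e ++ c = replicate k (0 : ZMod q) :=
      append_eq_replicate_iff.mpr ⟨by omega, he, hc⟩
    have hb' : b' = c ++ b := append_cancel_left (h.symm.trans (by rw [← hec, append_assoc]))
    exact ⟨a ++ b', by rw [hb', append_assoc], .refl⟩

theorem del_diamond {q k : ℕ} {y x x' : List (ZMod q)} (hx : Del q k y x) (hx' : Del q k y x') :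
    ∃ z, Relation.ReflGen (Del q k) x z ∧ Relation.ReflGen (Del q k) x' z := by
  obtain ⟨a, b, rfl, rfl⟩ := ins_iff_exists_append.mp hx
  obtain ⟨a', b', rfl, h⟩ := ins_iff_exists_append.mp hx'
  simp only [List.append_assoc] at h
  rcases List.append_eq_append_iff.mp h with ⟨c, rfl, hc⟩ | ⟨c, rfl, hc⟩
  · exact (exists_reflGen_del_of_append_eq a c b' b hc).imp fun _ => And.symm
  · exact exists_reflGen_del_of_append_eq a' c b b' hc

theorem exists_insN_join_within {q k t : ℕ} {z x x' : List (ZMod q)}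
    (hx : ∃ u ≤ t, InsN q k u z x) (hx' : ∃ u ≤ t, InsN q k u z x') :
    ∃ y, (∃ u ≤ t, InsN q k u x y) ∧ ∃ u ≤ t, InsN q k u x' y := by
  rw [insN_eq_relIter] at hx hx' ⊢
  refine RelIter.exists_join_within (fun _ _ _ h h' => ?_) hx hx'
  obtain ⟨y, hy, hy'⟩ := ins_diamond h h'
  exact ⟨y, .single hy, .single hy'⟩

theorem exists_delN_join_within {q k t : ℕ} {y x x' : List (ZMod q)}
    (hx : ∃ u ≤ t, DelN q k u y x) (hx' : ∃ u ≤ t, DelN q k u y x') :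
    ∃ z, (∃ u ≤ t, DelN q k u x z) ∧ ∃ u ≤ t, DelN q k u x' z := by
  rw [delN_eq_relIter] at hx hx' ⊢
  exact RelIter.exists_join_within (fun _ _ _ => del_diamond) hx hx'

theorem stmt3_general (q t k : ℕ)
    (C : Set (List (ZMod q))) :
    CorrectsIns q k t C ↔ CorrectsDel q k t C := by
  constructor
  · intro hC x hx x' hx' z hxz hx'z
    simp only [delN_iff_insN] at hxz hx'z
    obtain ⟨y, hxy, hx'y⟩ := exists_insN_join_within hxz hx'z
    exact hC x hx x' hx' y hxy hx'y
  · intro hC x hx x' hx' y hxy hx'y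
    simp only [← delN_iff_insN] at hxy hx'y
    obtain ⟨z, hxz, hx'z⟩ := exists_delN_join_within hxy hx'y
    exact hC x hx x' hx' z hxz hx'z

/-- a code `C ⊆ (ℤ_q)^n` corrects `t` insertions of blocks `0^k`
iff it corrects `t` deletions of blocks `0^k`. -/
theorem stmt3 (q n t k : ℕ) (hq : 2 ≤ q) (hn : 1 ≤ n) (ht : 1 ≤ t) (hk : 1 ≤ k)
    (C : Set (List (ZMod q))) (hC : ∀ x ∈ C, x.length = n) :
    CorrectsIns q k t C ↔ CorrectsDel q k t C :=
  stmt3_general q t k C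
end

section
/- Let B = {b_1,…,b_w} be a Sidon set of order t in a finite abelian group G and b ∈ G. The code C = { x ∈ Z_q^n : wt(x) = w and Σ_{i=1}^w ⌊r_i(x)/k⌋ b_i = b } can correct t insertions of blocks 0^k: for any two (not necessarily distinct) codewords x, x' ∈ C and any u, u' ≤ t, if a string y is obtainable from x by u insertions of 0^k and also from x' by u' insertions of 0^k, then x = x'. -/
/-!
Inserting `0^k` lengthens exactly one run of zeros by `k` and leaves the sequence of nonzero
letters unchanged. So if `y` arises from `x` by `u` insertions, then `r_i(y) = r_i(x) + k c_i`,
where `c_i` counts the insertions into the `i`-th run and `∑ c_i = u`; comparing lengths,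
`|y| = |x| + u k` forces `u = u'`. Since `⌊(r + k c)/k⌋ = ⌊r/k⌋ + c`, the checksum of `y`
computed through either codeword gives `b + ∑_{i ≥ 1} c_i b_i = b + ∑_{i ≥ 1} c'_i b_i`, and
the Sidon property yields `c_i = c'_i` for `i ≥ 1`; then also `c_0 = c'_0`, both totals being `u`.
Hence `x` and `x'` have the same runs and the same nonzero letters, so they coincide.
-/

/-- The Hamming weight of a string over `ℤ_q`. -/
def wt (q : ℕ) (x : List (ZMod q)) : ℕ := x.countP fun a => decide (a ≠ 0)

/-- The list `[r_0(x), r_1(x), …, r_w(x)]` of lengths of the runs of zeros of `x`,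
where `x = 0^{r_0} α_1 0^{r_1} α_2 ⋯ α_w 0^{r_w}` with all `α_i ≠ 0`. -/
def zeroRuns (q : ℕ) : List (ZMod q) → List ℕ
  | [] => [0]
  | a :: rest =>
    if a = 0 then
      match zeroRuns q rest with
      | r :: rs => (r + 1) :: rs
      | [] => [1]
    else 0 :: zeroRuns q rest

section ZeroRuns

variable {q : ℕ}

theorem zeroRuns_ne_nil (x : List (ZMod q)) : zeroRuns q x ≠ [] := by
  cases x with
  | nil => simp [zeroRuns]
  | cons a rest => unfold zeroRuns; split_ifs <;> (try split) <;> simp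

theorem zeroRuns_zero_cons (l : List (ZMod q)) :
    zeroRuns q (0 :: l) = (zeroRuns q l).modify 0 (· + 1) := by
  obtain ⟨r, rs, h⟩ := List.exists_cons_of_ne_nil (zeroRuns_ne_nil l)
  simp [zeroRuns, h]

theorem zeroRuns_cons_of_ne_zero {a : ZMod q} (ha : a ≠ 0) (l : List (ZMod q)) :
    zeroRuns q (a :: l) = 0 :: zeroRuns q l := by
  simp [zeroRuns, ha]

theorem zeroRuns_replicate_append (m : ℕ) (l : List (ZMod q)) :
    zeroRuns q (List.replicate m 0 ++ l) = (zeroRuns q l).modify 0 (· + m) := by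
  induction m with
  | zero =>
    simp only [List.replicate_zero, List.nil_append, Nat.add_zero]
    exact (List.modify_id 0 _).symm
  | succ m ih =>
    rw [List.replicate_succ, List.cons_append, zeroRuns_zero_cons, ih, List.modify_modify_eq]
    rfl

theorem length_zeroRuns (x : List (ZMod q)) : (zeroRuns q x).length = wt q x + 1 := by
  induction x with
  | nil => simp [zeroRuns, wt]
  | cons a rest ih =>
    by_cases ha : a = 0
    · simp_all [zeroRuns_zero_cons, wt]
    · simp_all [zeroRuns_cons_of_ne_zero ha, wt]

def ofZeroRuns : List ℕ → List (ZMod q) → List (ZMod q)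
  | r :: rs, a :: as => List.replicate r 0 ++ a :: ofZeroRuns rs as
  | r :: _, [] => List.replicate r 0
  | [], _ => []

theorem ofZeroRuns_succ_cons (r : ℕ) (rs : List ℕ) (as : List (ZMod q)) :
    ofZeroRuns ((r + 1) :: rs) as = 0 :: ofZeroRuns (r :: rs) as := by
  cases as <;> simp [ofZeroRuns, List.replicate_succ]

theorem ofZeroRuns_zeroRuns (x : List (ZMod q)) :
    ofZeroRuns (zeroRuns q x) (x.filter (· ≠ 0)) = x := by
  induction x with
  | nil => simp [zeroRuns, ofZeroRuns]
  | cons a rest ih =>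
    obtain ⟨r, rs, h⟩ := List.exists_cons_of_ne_nil (zeroRuns_ne_nil rest)
    by_cases ha : a = 0
    · subst ha
      rw [zeroRuns_zero_cons, h, List.modify_zero_cons, List.filter_cons_of_neg (by simp),
        ofZeroRuns_succ_cons, ← h, ih]
    · rw [zeroRuns_cons_of_ne_zero ha, List.filter_cons_of_pos (by simpa using ha)]
      simpa [ofZeroRuns] using ih

theorem eq_of_zeroRuns_eq_of_filter_eq {x x' : List (ZMod q)} (h : zeroRuns q x = zeroRuns q x')
    (h' : x.filter (· ≠ 0) = x'.filter (· ≠ 0)) : x = x' := by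
  rw [← ofZeroRuns_zeroRuns x, h, h', ofZeroRuns_zeroRuns]

end ZeroRuns

section Insertion

variable {q k : ℕ}

theorem zeroRuns_insert_replicate (x : List (ZMod q)) {j : ℕ} (hj : j ≤ x.length) :
    ∃ i < (zeroRuns q x).length,
      zeroRuns q (x.take j ++ List.replicate k 0 ++ x.drop j) =
        (zeroRuns q x).modify i (· + k) := by
  induction x generalizing j with
  | nil => exact ⟨0, by simp [zeroRuns], by simpa using zeroRuns_replicate_append k []⟩
  | cons a rest ih =>
    rcases j with _ | j
    · exact ⟨0, List.length_pos_of_ne_nil (zeroRuns_ne_nil _),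
        by simpa using zeroRuns_replicate_append k (a :: rest)⟩
    obtain ⟨i, hi, h⟩ := ih (j := j) (by simpa using hj)
    simp only [List.take_succ_cons, List.drop_succ_cons, List.cons_append]
    by_cases ha : a = 0
    · subst ha
      refine ⟨i, by simpa [zeroRuns_zero_cons] using hi, ?_⟩
      rw [zeroRuns_zero_cons, zeroRuns_zero_cons, h]
      rcases eq_or_ne i 0 with rfl | hi0
      · simp only [List.modify_modify_eq]
        congr 1
        funext r
        simp only [Function.comp_apply]
        omega
      · exact List.modify_modify_ne _ _ _ hi0
    · refine ⟨i + 1, by simpa [zeroRuns_cons_of_ne_zero ha] using hi, ?_⟩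
      rw [zeroRuns_cons_of_ne_zero ha, zeroRuns_cons_of_ne_zero ha, h, List.modify_succ_cons]

theorem List.getD_modify_add {l : List ℕ} {i : ℕ} (hi : i < l.length) (k j : ℕ) :
    (l.modify i (· + k)).getD j 0 = l.getD j 0 + if j = i then k else 0 := by
  rcases eq_or_ne j i with rfl | h
  · simp [List.getD_eq_getElem?_getD, hi]
  · simp [List.getD_eq_getElem?_getD, h, h.symm]

theorem InsN.exists_multiset_zeroRuns {u : ℕ} {x y : List (ZMod q)} (h : InsN q k u x y) :
    ∃ m : Multiset ℕ, Multiset.card m = u ∧ (∀ i ∈ m, i < (zeroRuns q x).length) ∧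
      ∀ i, (zeroRuns q y).getD i 0 = (zeroRuns q x).getD i 0 + k * m.count i := by
  induction u generalizing x with
  | zero =>
    obtain rfl : y = x := h
    exact ⟨0, by simp⟩
  | succ u ih =>
    obtain ⟨z, ⟨j, hj, rfl⟩, hzy⟩ := h
    obtain ⟨i, hi, hz⟩ := zeroRuns_insert_replicate (k := k) x hj
    obtain ⟨m, hm_card, hm_lt, hm⟩ := ih hzy
    rw [hz, List.length_modify] at hm_lt
    refine ⟨i ::ₘ m, by simp [hm_card], by simpa using ⟨hi, hm_lt⟩, fun j => ?_⟩
    rw [hm, hz, List.getD_modify_add hi, Multiset.count_cons]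
    split_ifs <;> ring

theorem InsN.filter_ne_zero {u : ℕ} {x y : List (ZMod q)} (h : InsN q k u x y) :
    y.filter (· ≠ 0) = x.filter (· ≠ 0) := by
  induction u generalizing x with
  | zero => exact congrArg _ h
  | succ u ih =>
    obtain ⟨z, ⟨j, -, rfl⟩, hzy⟩ := h
    rw [ih hzy, List.filter_append, List.filter_append, List.filter_replicate_of_neg (by simp),
      List.append_nil, ← List.filter_append, List.take_append_drop]

theorem InsN.length {u : ℕ} {x y : List (ZMod q)} (h : InsN q k u x y) :
    y.length = x.length + u * k := by
  induction u generalizing x with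
  | zero => simp [show y = x from h]
  | succ u ih =>
    obtain ⟨z, ⟨j, hj, rfl⟩, hzy⟩ := h
    rw [ih hzy]
    simp only [List.length_append, List.length_take, List.length_replicate, List.length_drop]
    rw [Nat.min_eq_left hj, Nat.succ_mul]
    omega

end Insertion

theorem eq_of_sum_nsmul_eq_of_sidon {ι G : Type*} [Fintype ι] [AddCommMonoid G] {b : ι → G}
    {t : ℕ} (hSidon : ∀ s s' : Multiset ι, Multiset.card s ≤ t → Multiset.card s' ≤ t →
      (s.map b).sum = (s'.map b).sum → s = s')
    {d d' : ι → ℕ} (hd : ∑ i, d i ≤ t) (hd' : ∑ i, d' i ≤ t)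
    (h : ∑ i, d i • b i = ∑ i, d' i • b i) : d = d' := by
  classical
  let toMultiset (e : ι → ℕ) : Multiset ι :=
    Finsupp.toMultiset (Finsupp.equivFunOnFinite.symm e)
  have hcard (e : ι → ℕ) : Multiset.card (toMultiset e) = ∑ i, e i := by
    simp [toMultiset, Finsupp.sum_fintype]
  have hsum (e : ι → ℕ) : ((toMultiset e).map b).sum = ∑ i, e i • b i := by
    simp [toMultiset, Finsupp.toMultiset_map, Finsupp.sum_mapDomain_index, Finsupp.sum_fintype,
      add_nsmul]
  have hcount (e : ι → ℕ) (i : ι) : (toMultiset e).count i = e i := by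
    simp [toMultiset]
  have := hSidon (toMultiset d) (toMultiset d') (by rwa [hcard]) (by rwa [hcard])
    (by rw [hsum, hsum, h])
  funext i
  rw [← hcount d, this, hcount]

theorem card_eq_count_zero_add_sum_count_succ {w : ℕ} {m : Multiset ℕ}
    (hm : ∀ i ∈ m, i < w + 1) :
    Multiset.card m = m.count 0 + ∑ i : Fin w, m.count ((i : ℕ) + 1) := by
  rw [← Multiset.sum_count_eq_card (s := Finset.range (w + 1)) (by simpa using hm),
    Finset.sum_range_succ', Fin.sum_univ_eq_sum_range (fun i => m.count (i + 1)), add_comm]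

theorem eq_of_card_eq_of_count_succ_eq {w : ℕ} {m m' : Multiset ℕ} (hm : ∀ i ∈ m, i < w + 1)
    (hm' : ∀ i ∈ m', i < w + 1) (hcard : Multiset.card m = Multiset.card m')
    (hcount : ∀ i : Fin w, m.count ((i : ℕ) + 1) = m'.count ((i : ℕ) + 1)) : m = m' := by
  ext j
  rcases j with _ | j
  · have := card_eq_count_zero_add_sum_count_succ hm
    have := card_eq_count_zero_add_sum_count_succ hm'
    have : ∑ i : Fin w, m.count ((i : ℕ) + 1) = ∑ i : Fin w, m'.count ((i : ℕ) + 1) :=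
      Finset.sum_congr rfl fun i _ => hcount i
    omega
  · by_cases hj : j < w
    · exact hcount ⟨j, hj⟩
    · rw [Multiset.count_eq_zero_of_notMem fun h => by have := hm _ h; omega,
        Multiset.count_eq_zero_of_notMem fun h => by have := hm' _ h; omega]

theorem List.ext_getD_of_length_eq_s6 {l l' : List ℕ} (hlen : l.length = l'.length)
    (h : ∀ i, l.getD i 0 = l'.getD i 0) : l = l' :=
  List.ext_getElem hlen fun i hi hi' => by
    rw [← List.getD_eq_getElem _ 0 hi, ← List.getD_eq_getElem _ 0 hi', h]

theorem sum_div_nsmul_of_eq_add_mul {ι G : Type*} [Fintype ι] [AddCommMonoid G] {k : ℕ}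
    (hk : 0 < k) {f g c : ι → ℕ} (h : ∀ i, g i = f i + k * c i) (b : ι → G) :
    ∑ i, (g i / k) • b i = ∑ i, (f i / k) • b i + ∑ i, c i • b i := by
  rw [← Finset.sum_add_distrib]
  refine Finset.sum_congr rfl fun i _ => ?_
  rw [h i, Nat.add_mul_div_left _ _ hk, add_nsmul]

theorem stmt6_general {G : Type*} [AddCommGroup G]
    (q n w t k : ℕ) (hk : 1 ≤ k)
    (b : Fin w → G)
    (hSidon : ∀ s s' : Multiset (Fin w), Multiset.card s ≤ t → Multiset.card s' ≤ t →
      (s.map b).sum = (s'.map b).sum → s = s')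
    (b0 : G)
    (C : Set (List (ZMod q)))
    (hC : C = {x | x.length = n ∧ wt q x = w ∧
      ∑ i : Fin w, ((zeroRuns q x).getD ((i : ℕ) + 1) 0 / k) • b i = b0})
    (x x' : List (ZMod q)) (hx : x ∈ C) (hx' : x' ∈ C)
    (u u' : ℕ) (hu : u ≤ t)
    (y : List (ZMod q)) (hxy : InsN q k u x y) (hx'y : InsN q k u' x' y) :
    x = x' := by
  subst hC
  obtain ⟨hxn, hxw, hxs⟩ := hx
  obtain ⟨hxn', hxw', hxs'⟩ := hx'
  obtain rfl : u' = u := Nat.eq_of_mul_eq_mul_right hk <| by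
    have := hxy.length; have := hx'y.length; omega
  obtain ⟨m, hm_card, hm_lt, hm⟩ := hxy.exists_multiset_zeroRuns
  obtain ⟨m', hm'_card, hm'_lt, hm'⟩ := hx'y.exists_multiset_zeroRuns
  have hlen : (zeroRuns q x).length = w + 1 := by rw [length_zeroRuns, hxw]
  have hlen' : (zeroRuns q x').length = w + 1 := by rw [length_zeroRuns, hxw']
  rw [hlen] at hm_lt
  rw [hlen'] at hm'_lt
  have hcount :
      (fun i : Fin w => m.count ((i : ℕ) + 1)) = fun i : Fin w => m'.count ((i : ℕ) + 1) := by
    have hy := (sum_div_nsmul_of_eq_add_mul hk (fun i : Fin w => hm (i + 1)) b).symm.trans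
      (sum_div_nsmul_of_eq_add_mul hk (fun i : Fin w => hm' (i + 1)) b)
    rw [hxs, hxs'] at hy
    have := card_eq_count_zero_add_sum_count_succ hm_lt
    have := card_eq_count_zero_add_sum_count_succ hm'_lt
    exact eq_of_sum_nsmul_eq_of_sidon hSidon (by omega) (by omega) (add_left_cancel hy)
  obtain rfl : m = m' := eq_of_card_eq_of_count_succ_eq hm_lt hm'_lt (by omega) (congrFun hcount)
  have hruns : zeroRuns q x = zeroRuns q x' :=
    List.ext_getD_of_length_eq_s6 (by omega) fun i => by have := hm i; have := hm' i; omega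
  exact eq_of_zeroRuns_eq_of_filter_eq hruns (hxy.filter_ne_zero.symm.trans hx'y.filter_ne_zero)

/-- the code `C = {x ∈ (ℤ_q)^n : wt(x) = w, Σ_{i=1}^w ⌊r_i(x)/k⌋ b_i = b}`
built from a Sidon set `B = {b_1,…,b_w}` of order `t` corrects `t` insertions of
blocks `0^k`: if `y` is obtainable from codewords `x` and `x'` by `u ≤ t` and
`u' ≤ t` insertions of `0^k` respectively, then `x = x'`. -/
theorem stmt6 {G : Type*} [AddCommGroup G] [Fintype G]
    (q n w t k : ℕ) (hq : 2 ≤ q) (hn : 1 ≤ n) (hw : 1 ≤ w) (ht : 1 ≤ t) (hk : 1 ≤ k)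
    (b : Fin w → G) (hb : Function.Injective b)
    (hSidon : ∀ s s' : Multiset (Fin w), Multiset.card s ≤ t → Multiset.card s' ≤ t →
      (s.map b).sum = (s'.map b).sum → s = s')
    (b0 : G)
    (C : Set (List (ZMod q)))
    (hC : C = {x | x.length = n ∧ wt q x = w ∧
      ∑ i : Fin w, ((zeroRuns q x).getD ((i : ℕ) + 1) 0 / k) • b i = b0})
    (x x' : List (ZMod q)) (hx : x ∈ C) (hx' : x' ∈ C)
    (u u' : ℕ) (hu : u ≤ t) (hu' : u' ≤ t)
    (y : List (ZMod q)) (hxy : InsN q k u x y) (hx'y : InsN q k u' x' y) :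
    x = x' :=
  stmt6_general q n w t k hk b hSidon b0 C hC x x' hx hx' u u' hu y hxy hx'y
end

section
/- For fixed integers q ≥ 2, k ≥ 1, t ≥ 0, the sequence a_s = q^{ks} · s! · (t-s)!, 0 ≤ s ≤ t, attains its minimum at s* = ⌊(t+1)/(q^k+1)⌋; that is, a_{s*} ≤ a_s for all 0 ≤ s ≤ t. -/
/-- the sequence under study -/
def stmt11f (q k t s : ℕ) : ℕ := q ^ (k * s) * s.factorial * (t - s).factorial

lemma stmt11_step_dec (q k t s : ℕ) (h : q ^ k * (s + 1) ≤ t - s) (hst : s < t) :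
    stmt11f q k t (s + 1) ≤ stmt11f q k t s := by
  unfold stmt11f
  have e1 : q ^ (k * (s + 1)) = q ^ (k * s) * q ^ k := by rw [Nat.mul_succ, pow_add]
  have e2 : (s + 1).factorial = (s + 1) * s.factorial := Nat.factorial_succ s
  have e3 : (t - s).factorial = (t - s) * (t - (s + 1)).factorial := by
    conv_lhs => rw [show t - s = (t - (s + 1)) + 1 from by omega]
    rw [Nat.factorial_succ, show (t - (s + 1)) + 1 = t - s from by omega]
  rw [e1, e2, e3]
  calc q ^ (k * s) * q ^ k * ((s + 1) * s.factorial) * (t - (s + 1)).factorial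
      = q ^ (k * s) * s.factorial * (t - (s + 1)).factorial * (q ^ k * (s + 1)) := by ring
    _ ≤ q ^ (k * s) * s.factorial * (t - (s + 1)).factorial * (t - s) :=
        Nat.mul_le_mul_left _ h
    _ = q ^ (k * s) * s.factorial * ((t - s) * (t - (s + 1)).factorial) := by ring

lemma stmt11_step_inc (q k t s : ℕ) (h : t - s ≤ q ^ k * (s + 1)) (hst : s < t) :
    stmt11f q k t s ≤ stmt11f q k t (s + 1) := by
  unfold stmt11f
  have e1 : q ^ (k * (s + 1)) = q ^ (k * s) * q ^ k := by rw [Nat.mul_succ, pow_add]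
  have e2 : (s + 1).factorial = (s + 1) * s.factorial := Nat.factorial_succ s
  have e3 : (t - s).factorial = (t - s) * (t - (s + 1)).factorial := by
    conv_lhs => rw [show t - s = (t - (s + 1)) + 1 from by omega]
    rw [Nat.factorial_succ, show (t - (s + 1)) + 1 = t - s from by omega]
  rw [e1, e2, e3]
  calc q ^ (k * s) * s.factorial * ((t - s) * (t - (s + 1)).factorial)
      = q ^ (k * s) * s.factorial * (t - (s + 1)).factorial * (t - s) := by ring
    _ ≤ q ^ (k * s) * s.factorial * (t - (s + 1)).factorial * (q ^ k * (s + 1)) :=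
        Nat.mul_le_mul_left _ h
    _ = q ^ (k * s) * q ^ k * ((s + 1) * s.factorial) * (t - (s + 1)).factorial := by ring

/-- for `q ≥ 2`, `k ≥ 1`, the sequence `a_s = q^{ks}·s!·(t-s)!`
(`0 ≤ s ≤ t`) attains its minimum at `s* = ⌊(t+1)/(q^k+1)⌋`. -/
theorem stmt11 (q k t : ℕ) (hq : 2 ≤ q) (hk : 1 ≤ k)
    (s : ℕ) (hs : s ≤ t) :
    q ^ (k * ((t + 1) / (q ^ k + 1))) * ((t + 1) / (q ^ k + 1)).factorial *
        (t - (t + 1) / (q ^ k + 1)).factorial ≤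
      q ^ (k * s) * s.factorial * (t - s).factorial := by
  have hd : 2 ≤ q ^ k := le_trans hq (Nat.le_self_pow (by omega) q)
  have hpos : 0 < q ^ k + 1 := by omega
  set m := (t + 1) / (q ^ k + 1) with hm
  show stmt11f q k t m ≤ stmt11f q k t s
  rcases le_or_gt s m with hsm | hms
  · -- decreasing part
    have dec : ∀ i, stmt11f q k t m ≤ stmt11f q k t (m - i) := by
      intro i
      induction i with
      | zero => simp
      | succ i ih =>
        rcases Nat.lt_or_ge i m with h1 | h1
        · have hmul : (m - i) * (q ^ k + 1) ≤ t + 1 :=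
            (Nat.le_div_iff_mul_le hpos).mp (Nat.sub_le m i)
          have h2 : q ^ k * (m - i) + (m - i) ≤ t + 1 := by
            calc q ^ k * (m - i) + (m - i) = (m - i) * (q ^ k + 1) := by ring
              _ ≤ t + 1 := hmul
          have h3 : 2 * (m - i) ≤ q ^ k * (m - i) := Nat.mul_le_mul_right _ hd
          have heq : m - (i + 1) + 1 = m - i := by omega
          have hcond : q ^ k * (m - (i + 1) + 1) ≤ t - (m - (i + 1)) := by
            rw [heq]; omega
          have hlt : m - (i + 1) < t := by omega
          have := stmt11_step_dec q k t (m - (i + 1)) hcond hlt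
          rw [heq] at this
          exact le_trans ih this
        · rw [show m - (i + 1) = m - i from by omega]
          exact ih
    have := dec (m - s)
    rwa [show m - (m - s) = s from by omega] at this
  · -- increasing part
    have inc : ∀ i, m + i ≤ t → stmt11f q k t m ≤ stmt11f q k t (m + i) := by
      intro i
      induction i with
      | zero => intro _; simp
      | succ i ih =>
        intro hle
        have ih' := ih (by omega)
        have hmul : t + 1 < (m + i + 1) * (q ^ k + 1) :=
          (Nat.div_lt_iff_lt_mul hpos).mp (by omega)
        have h2 : (m + i + 1) * (q ^ k + 1) = q ^ k * (m + i + 1) + (m + i + 1) := by ring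
        have hcond : t - (m + i) ≤ q ^ k * (m + i + 1) := by omega
        have hlt : m + i < t := by omega
        have := stmt11_step_inc q k t (m + i) hcond hlt
        rw [show m + (i + 1) = m + i + 1 from rfl]
        exact le_trans ih' this
    have := inc (s - m) (by omega)
    rwa [show m + (s - m) = s from by omega] at this
end

section
/- Given a finite abelian group G containing a Sidon set of order t of size w, there exists a code C ⊆ Z_q^n of constant weight w correcting t insertions of blocks 0^k with |C| ≥ C(n,w)(q-1)^w / |G|. -/
/-!
Record a string by its nonzero symbols and its zero runs `r₀, …, r_w` (the runs before, between
and after the nonzero symbols). Inserting `0^k` keeps the symbols and adds `k` to one run, so `u`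
insertions add `k · count i s` to `rᵢ` for a multiset `s` of `u` run positions, and the syndrome
`∑_{i<w} ⌊rᵢ/k⌋ bᵢ` grows by `∑_{i<w} (count i s) bᵢ`. If codewords `x, x'` with the same length
and syndrome both reach `y`, then `|s| = |s'|` by length, the Sidon property forces `s` and `s'`
to agree below `w`, and since `y` has weight `w` both live on `{0, …, w}`, so `s = s'`. Hence `x`
and `x'` have the same runs and symbols. The bound
is the pigeonhole principle over the `|G|` syndrome classes of the `C(n,w)(q-1)^w` strings.
-/

open Finset

section ZeroRuns

variable {α : Type*} [Zero α] [DecidableEq α]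

/-- `zeroRun x i` is the length of the `i`-th run of zeros of `x`: `i = 0` is the run before the
first nonzero symbol, `i = #(nonzero symbols)` the run after the last one, and larger `i`
give `0`. -/
def zeroRun : List α → ℕ → ℕ
  | [], _ => 0
  | a :: x, 0 => if a = 0 then zeroRun x 0 + 1 else 0
  | a :: x, i + 1 => if a = 0 then zeroRun x (i + 1) else zeroRun x i

theorem eq_of_zeroRun_eq_of_filter_eq {x y : List α} (hr : zeroRun x = zeroRun y)
    (hf : x.filter (· ≠ 0) = y.filter (· ≠ 0)) : x = y := by
  induction x generalizing y with
  | nil =>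
    cases y with
    | nil => rfl
    | cons b y =>
      have h0 := congrFun hr 0
      by_cases hb : b = 0 <;> simp_all [zeroRun]
  | cons a x ih =>
    cases y with
    | nil =>
      have h0 := congrFun hr 0
      by_cases ha : a = 0 <;> simp_all [zeroRun]
    | cons b y =>
      have h0 := congrFun hr 0
      have hs : ∀ i, zeroRun (a :: x) (i + 1) = zeroRun (b :: y) (i + 1) := fun i => congrFun hr _
      by_cases ha : a = 0 <;> by_cases hb : b = 0
      · subst ha hb
        refine congrArg _ (ih (funext fun i => ?_) (by simpa using hf))
        cases i <;> simp_all [zeroRun]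
      · simp_all [zeroRun]
      · simp_all [zeroRun]
      · simp only [List.filter_cons, ne_eq, ha, hb, not_false_eq_true, decide_true,
          if_true, List.cons.injEq] at hf
        simp only [zeroRun, ha, hb, if_false] at hs
        rw [hf.1, ih (funext hs) hf.2]

theorem zeroRun_eq_zero_of_countP_lt {x : List α} {i : ℕ} (hi : x.countP (· ≠ 0) < i) :
    zeroRun x i = 0 := by
  induction x generalizing i with
  | nil => simp [zeroRun]
  | cons a x ih =>
    obtain _ | i := i
    · simp at hi
    by_cases ha : a = 0
    · simp_all [zeroRun]
    · simp only [zeroRun, ha, if_false]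
      exact ih (by simp_all)

theorem zeroRun_replicate_append (k : ℕ) (x : List α) :
    zeroRun (List.replicate k 0 ++ x) = zeroRun x + Pi.single 0 k := by
  induction k with
  | zero => simp
  | succ k ih =>
    funext i
    obtain _ | i := i <;> simp_all [List.replicate_succ, zeroRun, add_assoc]

theorem exists_zeroRun_insert_eq (k : ℕ) (x : List α) (j : ℕ) :
    ∃ m, zeroRun (x.take j ++ List.replicate k 0 ++ x.drop j) = zeroRun x + Pi.single m k := by
  induction x generalizing j with
  | nil => exact ⟨0, by simpa using zeroRun_replicate_append k ([] : List α)⟩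
  | cons a x ih =>
    obtain _ | j := j
    · exact ⟨0, by simpa using zeroRun_replicate_append k (a :: x)⟩
    obtain ⟨m, hm⟩ := ih j
    by_cases ha : a = 0
    · refine ⟨m, funext fun i => ?_⟩
      have := congrFun hm
      obtain _ | i := i <;> simp_all [zeroRun, Pi.single_apply, add_right_comm]
    · refine ⟨m + 1, funext fun i => ?_⟩
      have := congrFun hm
      obtain _ | i := i <;> simp_all [zeroRun, Pi.single_apply]

end ZeroRuns

section Insertions

variable {q k : ℕ}

theorem Ins.length_eq {x y : List (ZMod q)} (h : Ins q k x y) : y.length = x.length + k := by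
  obtain ⟨j, hj, rfl⟩ := h
  simp only [List.length_append, List.length_take, List.length_replicate, List.length_drop]
  omega

theorem Ins.filter_eq {x y : List (ZMod q)} (h : Ins q k x y) :
    y.filter (· ≠ 0) = x.filter (· ≠ 0) := by
  obtain ⟨j, _, rfl⟩ := h
  rw [List.filter_append, List.filter_append, List.filter_replicate, if_neg (by simp),
    List.append_nil, ← List.filter_append, List.take_append_drop]

theorem InsN.length_eq : ∀ {u : ℕ} {x y : List (ZMod q)}, InsN q k u x y →
    y.length = x.length + u * k
  | 0, _, _, rfl => by simp
  | _ + 1, _, _, ⟨_, hxz, hzy⟩ => by rw [hzy.length_eq, hxz.length_eq]; ring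

theorem InsN.filter_eq : ∀ {u : ℕ} {x y : List (ZMod q)}, InsN q k u x y →
    y.filter (· ≠ 0) = x.filter (· ≠ 0)
  | 0, _, _, rfl => rfl
  | _ + 1, _, _, ⟨_, hxz, hzy⟩ => hzy.filter_eq.trans hxz.filter_eq

theorem InsN.exists_zeroRun_eq : ∀ {u : ℕ} {x y : List (ZMod q)}, InsN q k u x y →
    ∃ s : Multiset ℕ, Multiset.card s = u ∧ ∀ i, zeroRun y i = zeroRun x i + k * s.count i
  | 0, _, _, rfl => ⟨0, by simp⟩
  | _ + 1, x, _, ⟨_, ⟨j, _, rfl⟩, hzy⟩ => by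
    obtain ⟨m, hm⟩ := exists_zeroRun_insert_eq k x j
    obtain ⟨s, rfl, hs⟩ := hzy.exists_zeroRun_eq
    refine ⟨m ::ₘ s, by simp, fun i => ?_⟩
    rw [hs, hm, Multiset.count_cons]
    simp only [Pi.add_apply, Pi.single_apply]
    split_ifs <;> ring

end Insertions

theorem Multiset.eq_of_count_eq_of_card_eq {s s' : Multiset ℕ} {w : ℕ} (hs : ∀ i ∈ s, i ≤ w)
    (hs' : ∀ i ∈ s', i ≤ w) (hcard : card s = card s')
    (hcount : ∀ i < w, s.count i = s'.count i) : s = s' := by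
  have hsum : ∀ m : Multiset ℕ, (∀ i ∈ m, i ≤ w) →
      ∑ i ∈ Finset.range w, m.count i + m.count w = card m := fun m hm => by
    rw [← sum_range_succ, sum_count_eq_card fun i hi => mem_range_succ_iff.mpr (hm i hi)]
  have hbelow : ∑ i ∈ Finset.range w, s.count i = ∑ i ∈ Finset.range w, s'.count i :=
    sum_congr rfl fun i hi => hcount i (mem_range.mp hi)
  ext i
  rcases lt_trichotomy i w with hi | rfl | hi
  · exact hcount i hi
  · have := hsum s hs
    have := hsum s' hs'
    omega
  · rw [count_eq_zero_of_notMem fun h => (hs i h).not_gt hi,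
      count_eq_zero_of_notMem fun h => (hs' i h).not_gt hi]

theorem Multiset.sum_fin_count_le_card (s : Multiset ℕ) (w : ℕ) :
    ∑ i : Fin w, s.count (i : ℕ) ≤ card s := by
  rw [Fin.sum_univ_eq_sum_range (s.count ·),
    ← sum_count_eq_card fun i hi => Finset.mem_union_right (Finset.range w) (mem_toFinset.mpr hi)]
  exact sum_le_sum_of_subset Finset.subset_union_left

def IsSidonOfOrder {G : Type*} [AddCommMonoid G] {w : ℕ} (t : ℕ) (b : Fin w → G) : Prop :=
  ∀ s s' : Multiset (Fin w), Multiset.card s ≤ t → Multiset.card s' ≤ t →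
    (s.map b).sum = (s'.map b).sum → s = s'

theorem IsSidonOfOrder.eq_of_sum_nsmul_eq {G : Type*} [AddCommMonoid G] {w t : ℕ}
    {b : Fin w → G} (hb : IsSidonOfOrder t b) {c c' : Fin w → ℕ} (hc : ∑ i, c i ≤ t)
    (hc' : ∑ i, c' i ≤ t) (h : ∑ i, c i • b i = ∑ i, c' i • b i) : c = c' := by
  let ofCount (c : Fin w → ℕ) : Multiset (Fin w) := univ.val.bind fun i => .replicate (c i) i
  have hcard (c : Fin w → ℕ) : Multiset.card (ofCount c) = ∑ i, c i := by
    simp [ofCount, sum_eq_multiset_sum]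
  have hsum (c : Fin w → ℕ) : ((ofCount c).map b).sum = ∑ i, c i • b i := by
    simp [ofCount, Multiset.map_bind, Multiset.sum_bind, sum_eq_multiset_sum]
  have hcount (c : Fin w → ℕ) (i : Fin w) : (ofCount c).count i = c i := by
    rw [Multiset.count_bind, ← sum_eq_multiset_sum]
    simp [Multiset.count_replicate]
  have := hb _ _ ((hcard c).trans_le hc) ((hcard c').trans_le hc')
    ((hsum c).trans (h.trans (hsum c').symm))
  funext i
  rw [← hcount c, ← hcount c', this]

section Syndrome

variable {α G : Type*} [Zero α] [DecidableEq α] [AddCommMonoid G] {w : ℕ}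

def zeroRunSyndrome (k : ℕ) (b : Fin w → G) (x : List α) : G :=
  ∑ i : Fin w, (zeroRun x i / k) • b i

theorem zeroRunSyndrome_eq_add {k : ℕ} (hk : 0 < k) (b : Fin w → G) {x y : List α} {s : Multiset ℕ}
    (h : ∀ i, zeroRun y i = zeroRun x i + k * s.count i) :
    zeroRunSyndrome k b y = zeroRunSyndrome k b x + ∑ i : Fin w, s.count (i : ℕ) • b i := by
  simp only [zeroRunSyndrome, h, Nat.add_mul_div_left _ _ hk, add_nsmul, sum_add_distrib]

theorem le_countP_of_mem_of_zeroRun_eq {k : ℕ} (hk : 0 < k) {x y : List α} {s : Multiset ℕ}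
    (h : ∀ i, zeroRun y i = zeroRun x i + k * s.count i) {i : ℕ} (hi : i ∈ s) :
    i ≤ y.countP (· ≠ 0) := by
  by_contra hlt
  have := zeroRun_eq_zero_of_countP_lt (not_le.mp hlt)
  rw [h] at this
  have := Nat.mul_pos hk (Multiset.count_pos.mpr hi)
  omega

end Syndrome

theorem InsN.wt_eq {q k u : ℕ} {x y : List (ZMod q)} (h : InsN q k u x y) : wt q y = wt q x := by
  simp only [wt, List.countP_eq_length_filter, h.filter_eq]

theorem correctsIns_setOf_zeroRunSyndrome_eq {G : Type*} [AddCancelCommMonoid G]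
    {q n w t k : ℕ} (hk : 0 < k) {b : Fin w → G} (hb : IsSidonOfOrder t b) (g : G) :
    CorrectsIns q k t {x | x.length = n ∧ wt q x = w ∧ zeroRunSyndrome k b x = g} := by
  rintro x ⟨hxn, hxw, hxg⟩ x' ⟨hxn', hxw', hxg'⟩ y ⟨u, hu, hy⟩ ⟨u', hu', hy'⟩
  obtain ⟨s, rfl, hs⟩ := hy.exists_zeroRun_eq
  obtain ⟨s', rfl, hs'⟩ := hy'.exists_zeroRun_eq
  have hcard : Multiset.card s = Multiset.card s' := by
    have := hy.length_eq.symm.trans hy'.length_eq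
    exact Nat.eq_of_mul_eq_mul_right hk (by omega)
  have hcount : (fun i : Fin w => s.count (i : ℕ)) = fun i : Fin w => s'.count (i : ℕ) := by
    have hsy := zeroRunSyndrome_eq_add hk b hs
    have hsy' := zeroRunSyndrome_eq_add hk b hs'
    rw [hxg] at hsy
    rw [hxg'] at hsy'
    exact hb.eq_of_sum_nsmul_eq ((s.sum_fin_count_le_card w).trans hu)
      ((s'.sum_fin_count_le_card w).trans hu') (add_left_cancel (hsy.symm.trans hsy'))
  have hss : s = s' := Multiset.eq_of_count_eq_of_card_eq
    (fun i hi => (le_countP_of_mem_of_zeroRun_eq hk hs hi).trans_eq (hy.wt_eq.trans hxw))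
    (fun i hi => (le_countP_of_mem_of_zeroRun_eq hk hs' hi).trans_eq (hy'.wt_eq.trans hxw'))
    hcard fun i hi => congrFun hcount (⟨i, hi⟩ : Fin w)
  subst hss
  refine eq_of_zeroRun_eq_of_filter_eq (funext fun i => ?_) (hy.filter_eq.symm.trans hy'.filter_eq)
  have := (hs i).symm.trans (hs' i)
  omega

theorem wt_ofFn {q n : ℕ} (f : Fin n → ZMod q) : wt q (List.ofFn f) = #{i | f i ≠ 0} := by
  rw [wt, ← Multiset.coe_countP, ← Fin.univ_val_map, Multiset.countP_map]
  rfl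

theorem filter_support_eq_piFinset {ι β : Type*} [Fintype ι] [DecidableEq ι] [Fintype β]
    [Zero β] [DecidableEq β] (S : Finset ι) :
    ({f : ι → β | ({i | f i ≠ 0} : Finset ι) = S} : Finset (ι → β)) =
      Fintype.piFinset fun i => if i ∈ S then ({0}ᶜ : Finset β) else {0} := by
  ext f
  simp only [mem_filter, mem_univ, true_and, Fintype.mem_piFinset, Finset.ext_iff]
  refine forall_congr' fun i => ?_
  split_ifs with hi <;> simp [hi]

theorem card_filter_card_ne_zero_eq {ι β : Type*} [Fintype ι] [DecidableEq ι] [Fintype β]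
    [Zero β] [DecidableEq β] (w : ℕ) :
    #{f : ι → β | #{i | f i ≠ 0} = w} = (Fintype.card ι).choose w * (Fintype.card β - 1) ^ w := by
  rw [card_eq_sum_card_fiberwise (f := fun f : ι → β => ({i | f i ≠ 0} : Finset ι))
    (t := powersetCard w univ) fun f hf => mem_powersetCard_univ.mpr (mem_filter.mp hf).2,
    sum_const_nat (m := (Fintype.card β - 1) ^ w), card_powersetCard, card_univ]
  intro S hS
  rw [mem_powersetCard_univ] at hS
  rw [filter_filter, ← hS, filter_congr fun f _ => and_iff_right_of_imp (congrArg card),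
    filter_support_eq_piFinset, Fintype.card_piFinset]
  simp [apply_ite card, card_compl]

theorem exists_card_le_mul_card_fiber {α β : Type*} [DecidableEq β] [Fintype β] [Nonempty β]
    (s : Finset α) (f : α → β) : ∃ y, #s ≤ Fintype.card β * #{x ∈ s | f x = y} := by
  obtain ⟨y, -, hy⟩ := exists_max_image univ (fun y => #{x ∈ s | f x = y}) univ_nonempty
  refine ⟨y, ?_⟩
  calc #s = ∑ y', #{x ∈ s | f x = y'} := card_eq_sum_card_fiberwise fun _ _ => mem_univ _
    _ ≤ ∑ _ : β, #{x ∈ s | f x = y} := sum_le_sum fun y' _ => hy y' (mem_univ _)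
    _ = Fintype.card β * #{x ∈ s | f x = y} := by rw [sum_const, card_univ, smul_eq_mul]

theorem CorrectsIns.mono {q k t : ℕ} {C C' : Set (List (ZMod q))} (hC : CorrectsIns q k t C)
    (h : C' ⊆ C) : CorrectsIns q k t C' :=
  fun x hx x' hx' => hC x (h hx) x' (h hx')

theorem stmt18_general {G : Type*} [AddCommGroup G] [Fintype G]
    (q n w t k : ℕ) (hq : 2 ≤ q) (hk : 1 ≤ k)
    (b : Fin w → G)
    (hSidon : ∀ s s' : Multiset (Fin w), Multiset.card s ≤ t → Multiset.card s' ≤ t →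
      (s.map b).sum = (s'.map b).sum → s = s') :
    ∃ C : Set (List (ZMod q)),
      (∀ x ∈ C, x.length = n ∧ wt q x = w) ∧
      CorrectsIns q k t C ∧ C.Finite ∧
      n.choose w * (q - 1) ^ w ≤ Fintype.card G * C.ncard := by
  classical
  have : NeZero q := ⟨by omega⟩
  let T : Finset (List (ZMod q)) :=
    ({f : Fin n → ZMod q | #{i | f i ≠ 0} = w} : Finset _).map ⟨List.ofFn, List.ofFn_injective⟩
  have hT : ∀ x ∈ T, x.length = n ∧ wt q x = w := by
    simp only [T, mem_map, mem_filter_univ, Function.Embedding.coeFn_mk]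
    rintro _ ⟨f, hf, rfl⟩
    exact ⟨List.length_ofFn, (wt_ofFn f).trans hf⟩
  have hcard : #T = n.choose w * (q - 1) ^ w := by
    rw [card_map, card_filter_card_ne_zero_eq, Fintype.card_fin, ZMod.card]
  obtain ⟨g, hg⟩ := exists_card_le_mul_card_fiber T (zeroRunSyndrome k b)
  refine ⟨{x ∈ T | zeroRunSyndrome k b x = g}, fun x hx => hT x (mem_filter.mp hx).1, ?_,
    finite_toSet _, by rwa [Set.ncard_coe_finset, ← hcard]⟩
  refine (correctsIns_setOf_zeroRunSyndrome_eq (n := n) hk hSidon g).mono fun x hx => ?_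
  obtain ⟨hxT, hxg⟩ := mem_filter.mp hx
  exact ⟨(hT x hxT).1, (hT x hxT).2, hxg⟩

/-- given a finite abelian group `G` containing a Sidon set of order
`t` of size `w`, there is a constant-weight-`w` code `C ⊆ (ℤ_q)^n` correcting `t`
insertions of blocks `0^k` with `|C| ≥ C(n,w)(q-1)^w / |G|`. -/
theorem stmt18 {G : Type*} [AddCommGroup G] [Fintype G]
    (q n w t k : ℕ) (hq : 2 ≤ q) (hn : 1 ≤ n) (hw1 : 1 ≤ w) (hwn : w ≤ n)
    (ht : 1 ≤ t) (hk : 1 ≤ k)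
    (b : Fin w → G) (hb : Function.Injective b)
    (hSidon : ∀ s s' : Multiset (Fin w), Multiset.card s ≤ t → Multiset.card s' ≤ t →
      (s.map b).sum = (s'.map b).sum → s = s') :
    ∃ C : Set (List (ZMod q)),
      (∀ x ∈ C, x.length = n ∧ wt q x = w) ∧
      CorrectsIns q k t C ∧ C.Finite ∧
      n.choose w * (q - 1) ^ w ≤ Fintype.card G * C.ncard :=
  stmt18_general q n w t k hq hk b hSidon
end
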